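/- Let f : {-1,1}^n → {0,1} be computed by a decision tree of depth at most d, and let 0 ≤ ℓ ≤ d. Then ∑_{S ⊆ [n], |S|=ℓ} |f̂(S)| ≤ C(d,ℓ), where C(d,ℓ) denotes the binomial coefficient d choose ℓ. -/
import Mathlib


open scoped BigOperators

/-- A deterministic decision tree over variables indexed by `α`:
each internal node queries a variable (the first subtree is followed when the
variable equals `-1`, i.e. `false`, the second when it equals `1`, i.e. `true`),
and each leaf is labeled by `0` or `1` (encoded as a `Bool`). -/
inductive DTree (α : Type) : Type where
  | leaf : Bool → DTree α
  | node : α → DTree α → DTree α → DTree α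

namespace DTree

/-- Evaluation of a decision tree on an input in `{-1,1}^α`, encoded as a
function `α → Bool` (`true` stands for `1`, `false` for `-1`); the output
`{0,1}` is given as a real number. -/
def eval {α : Type} : DTree α → (α → Bool) → ℝ
  | leaf b, _ => if b then 1 else 0
  | node i t0 t1, x => if x i then t1.eval x else t0.eval x

/-- Depth of a decision tree: the maximal number of internal nodes on a
root-to-leaf path. -/
def depth {α : Type} : DTree α → ℕ
  | leaf _ => 0
  | node _ t0 t1 => 1 + max t0.depth t1.depth

end DTree

/-- The Fourier coefficient `f̂(S) = 2^{-n} ∑_{x ∈ {-1,1}^n} f(x) ∏_{i ∈ S} x_i`,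
for `f` on `{-1,1}^α` encoded as a function on `α → Bool`. -/
noncomputable def booleanFourierCoeff {α : Type} [Fintype α] [DecidableEq α]
    (f : (α → Bool) → ℝ) (S : Finset α) : ℝ :=
  (∑ x : α → Bool, f x * ∏ i ∈ S, (if x i then (1 : ℝ) else -1)) / 2 ^ Fintype.card α

/-- The average of `f` over the uniform distribution on `{-1,1}^α`;
for `{0,1}`-valued `f` this is `Pr[f(x) = 1]`. -/
noncomputable def uavg {α : Type} [Fintype α] [DecidableEq α]
    (f : (α → Bool) → ℝ) : ℝ :=
  (∑ x : α → Bool, f x) / 2 ^ Fintype.card α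

/-! ### Auxiliary machinery -/

section Chi

variable {α : Type} [Fintype α] [DecidableEq α]

/-- The character `χ_S`. -/
def bchi (S : Finset α) (x : α → Bool) : ℝ := ∏ i ∈ S, (if x i then (1 : ℝ) else -1)

lemma booleanFourierCoeff_def (f : (α → Bool) → ℝ) (S : Finset α) :
    booleanFourierCoeff f S = (∑ x : α → Bool, f x * bchi S x) / 2 ^ Fintype.card α := rfl

lemma bchi_erase {S : Finset α} {j : α} (hj : j ∈ S) (x : α → Bool) :
    bchi S x = (if x j then (1 : ℝ) else -1) * bchi (S.erase j) x := by
  rw [bchi, bchi, ← Finset.mul_prod_erase S _ hj]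

lemma bchi_update_notMem {S : Finset α} {j : α} (hj : j ∉ S) (x : α → Bool) (c : Bool) :
    bchi S (Function.update x j c) = bchi S x := by
  refine Finset.prod_congr rfl fun i hi => ?_
  have : i ≠ j := fun h => hj (h ▸ hi)
  rw [Function.update_of_ne this]

/-- `χ_{S Δ {j}} = χ_{{j}} · χ_S`. -/
lemma bchi_symmDiff (j : α) (S : Finset α) (x : α → Bool) :
    bchi (if j ∈ S then S.erase j else insert j S) x
      = (if x j then (1 : ℝ) else -1) * bchi S x := by
  by_cases hj : j ∈ S
  · simp only [hj, if_true]
    rw [bchi_erase hj x]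
    by_cases hx : x j <;> simp [hx]
  · simp only [hj, if_false]
    rw [bchi, Finset.prod_insert hj, ← bchi]

/-- Fourier coefficients at sets containing an irrelevant coordinate vanish. -/
lemma coeff_eq_zero_of_indep (f : (α → Bool) → ℝ) (j : α)
    (hf : ∀ x c, f (Function.update x j c) = f x) {S : Finset α} (hj : j ∈ S) :
    booleanFourierCoeff f S = 0 := by
  have key : ∑ x : α → Bool, f x * bchi S x = 0 := by
    have hinv : Function.Involutive (fun x : α → Bool => Function.update x j (!(x j))) := by
      intro x
      show Function.update (Function.update x j (!(x j))) j
        (!((Function.update x j (!(x j))) j)) = x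
      funext i
      by_cases h : i = j
      · subst h; simp
      · rw [Function.update_of_ne h, Function.update_of_ne h]
    set σ : Equiv.Perm (α → Bool) := hinv.toPerm _
    have hcomp : ∑ x : α → Bool, f (σ x) * bchi S (σ x)
        = ∑ x : α → Bool, f x * bchi S x :=
      Equiv.sum_comp σ (fun x => f x * bchi S x)
    have hneg : ∀ x : α → Bool, f (σ x) * bchi S (σ x) = -(f x * bchi S x) := by
      intro x
      have hfx : f (σ x) = f x := hf x _
      have hb : bchi S (σ x) = - bchi S x := by
        show bchi S (Function.update x j (!(x j))) = - bchi S x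
        rw [bchi_erase hj, bchi_erase hj x,
          bchi_update_notMem (Finset.notMem_erase j S),
          Function.update_self]
        by_cases hx : x j <;> simp [hx]
      rw [hfx, hb]; ring
    rw [Finset.sum_congr rfl (fun x _ => hneg x), Finset.sum_neg_distrib] at hcomp
    linarith
  rw [booleanFourierCoeff_def, key, zero_div]

/-- Fourier decomposition of `if x j then g1 x else g0 x`. -/
lemma coeff_node (g0 g1 : (α → Bool) → ℝ) (j : α) (S : Finset α) :
    booleanFourierCoeff (fun x => if x j then g1 x else g0 x) S
      = (booleanFourierCoeff g0 S + booleanFourierCoeff g1 S) / 2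
        + (booleanFourierCoeff g1 (if j ∈ S then S.erase j else insert j S)
            - booleanFourierCoeff g0 (if j ∈ S then S.erase j else insert j S)) / 2 := by
  set S' := if j ∈ S then S.erase j else insert j S with hS'
  have hpt : ∀ x : α → Bool,
      (if x j then g1 x else g0 x) * bchi S x
        = (g0 x * bchi S x + g1 x * bchi S x) / 2
          + (g1 x * bchi S' x - g0 x * bchi S' x) / 2 := by
    intro x
    have h := bchi_symmDiff j S x
    rw [← hS'] at h
    by_cases hx : x j = true
    · rw [if_pos hx] at h
      rw [if_pos hx, h]; ring
    · rw [if_neg hx] at h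
      rw [if_neg hx, h]; ring
  have hsum : ∑ x : α → Bool, (if x j then g1 x else g0 x) * bchi S x
      = ((∑ x : α → Bool, g0 x * bchi S x) + ∑ x : α → Bool, g1 x * bchi S x) / 2
        + ((∑ x : α → Bool, g1 x * bchi S' x) - ∑ x : α → Bool, g0 x * bchi S' x) / 2 := by
    rw [Finset.sum_congr rfl (fun x _ => hpt x), Finset.sum_add_distrib,
      ← Finset.sum_div, ← Finset.sum_div, Finset.sum_add_distrib, Finset.sum_sub_distrib]
  simp only [booleanFourierCoeff_def]
  rw [hsum]
  ring

end Chi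

namespace DTree

variable {α : Type} [DecidableEq α]

/-- Substitute the value of variable `j` by `b` throughout the tree. -/
def restrict (j : α) (b : Bool) : DTree α → DTree α
  | leaf c => leaf c
  | node i t0 t1 =>
    if i = j then (if b then restrict j b t1 else restrict j b t0)
    else node i (restrict j b t0) (restrict j b t1)

lemma depth_restrict (j : α) (b : Bool) (T : DTree α) :
    (restrict j b T).depth ≤ T.depth := by
  induction T with
  | leaf c => simp [restrict]
  | node i t0 t1 ih0 ih1 =>
    show (if i = j then (if b then restrict j b t1 else restrict j b t0)
        else node i (restrict j b t0) (restrict j b t1)).depth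
      ≤ 1 + max t0.depth t1.depth
    by_cases h : i = j
    · rw [if_pos h]
      cases b
      · rw [if_neg Bool.false_ne_true]
        exact le_trans ih0 (le_trans (le_max_left _ _) (Nat.le_add_left _ 1))
      · rw [if_pos rfl]
        exact le_trans ih1 (le_trans (le_max_right _ _) (Nat.le_add_left _ 1))
    · rw [if_neg h]
      show 1 + max (restrict j b t0).depth (restrict j b t1).depth ≤ 1 + max t0.depth t1.depth
      omega

lemma eval_restrict (j : α) (b : Bool) (T : DTree α) (x : α → Bool) :
    (restrict j b T).eval x = T.eval (Function.update x j b) := by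
  induction T with
  | leaf c => simp [restrict, eval]
  | node i t0 t1 ih0 ih1 =>
    show (if i = j then (if b then restrict j b t1 else restrict j b t0)
        else node i (restrict j b t0) (restrict j b t1)).eval x
      = if Function.update x j b i then t1.eval (Function.update x j b)
        else t0.eval (Function.update x j b)
    by_cases h : i = j
    · subst h
      rw [if_pos rfl, Function.update_self]
      cases b
      · rw [if_neg Bool.false_ne_true, if_neg Bool.false_ne_true]
        exact ih0
      · rw [if_pos rfl, if_pos rfl]
        exact ih1
    · rw [if_neg h, Function.update_of_ne h]
      show (if x i then (restrict j b t1).eval x else (restrict j b t0).eval x) = _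
      by_cases hx : x i = true
      · rw [if_pos hx, if_pos hx]; exact ih1
      · rw [if_neg hx, if_neg hx]; exact ih0

lemma eval_restrict_indep (j : α) (b : Bool) (T : DTree α) (x : α → Bool) (c : Bool) :
    (restrict j b T).eval (Function.update x j c) = (restrict j b T).eval x := by
  rw [eval_restrict, eval_restrict, Function.update_idem]

lemma eval_nonneg (T : DTree α) (x : α → Bool) : 0 ≤ T.eval x := by
  induction T with
  | leaf c => rw [eval]; split <;> norm_num
  | node i t0 t1 ih0 ih1 => rw [eval]; split <;> assumption

lemma eval_le_one (T : DTree α) (x : α → Bool) : T.eval x ≤ 1 := by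
  induction T with
  | leaf c => rw [eval]; split <;> norm_num
  | node i t0 t1 ih0 ih1 => rw [eval]; split <;> assumption

end DTree

section Level

variable {α : Type} [Fintype α] [DecidableEq α]

/-- Level-`ℓ` Fourier weight (in the `L¹` sense). -/
noncomputable def levelSum (f : (α → Bool) → ℝ) (ℓ : ℕ) : ℝ :=
  ∑ S ∈ Finset.univ.filter (fun S : Finset α => S.card = ℓ), |booleanFourierCoeff f S|

lemma levelSum_zero_le (f : (α → Bool) → ℝ) (h0 : ∀ x, 0 ≤ f x) (h1 : ∀ x, f x ≤ 1) :
    levelSum f 0 ≤ 1 := by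
  have hfilter : Finset.univ.filter (fun S : Finset α => S.card = 0) = {∅} := by
    ext S
    simp [Finset.card_eq_zero]
  rw [levelSum, hfilter, Finset.sum_singleton]
  have hsum : ∑ x : α → Bool, f x * bchi ∅ x = ∑ x : α → Bool, f x := by
    refine Finset.sum_congr rfl fun x _ => ?_
    simp [bchi]
  rw [booleanFourierCoeff_def, hsum]
  have hpos : (0 : ℝ) < 2 ^ Fintype.card α := by positivity
  have hnn : 0 ≤ (∑ x : α → Bool, f x) / 2 ^ Fintype.card α := by
    apply div_nonneg _ (le_of_lt hpos)
    exact Finset.sum_nonneg fun x _ => h0 x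
  rw [abs_of_nonneg hnn]
  rw [div_le_one hpos]
  calc ∑ x : α → Bool, f x ≤ ∑ _x : α → Bool, (1 : ℝ) :=
        Finset.sum_le_sum fun x _ => h1 x
    _ = (Fintype.card (α → Bool) : ℝ) := by simp
    _ = 2 ^ Fintype.card α := by
        rw [Fintype.card_fun]
        push_cast
        simp

lemma coeff_const (c : ℝ) {S : Finset α} (hS : S ≠ ∅) :
    booleanFourierCoeff (fun _ => c) S = 0 := by
  obtain ⟨j, hj⟩ := Finset.nonempty_of_ne_empty hS
  exact coeff_eq_zero_of_indep (fun _ => c) j (fun _ _ => rfl) hj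

lemma levelSum_leaf_le (b : Bool) (d ℓ : ℕ) :
    levelSum (DTree.eval (DTree.leaf b) (α := α)) ℓ ≤ (d.choose ℓ : ℝ) := by
  cases ℓ with
  | zero =>
    have h := levelSum_zero_le (DTree.eval (DTree.leaf b) (α := α))
      (fun x => DTree.eval_nonneg _ x) (fun x => DTree.eval_le_one _ x)
    simpa using h
  | succ m =>
    have hz : levelSum (DTree.eval (DTree.leaf b) (α := α)) (m + 1) = 0 := by
      rw [levelSum]
      refine Finset.sum_eq_zero fun S hS => ?_
      simp only [Finset.mem_filter] at hS
      have hSne : S ≠ ∅ := by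
        intro h
        rw [h, Finset.card_empty] at hS
        omega
      have : DTree.eval (DTree.leaf b) (α := α) = fun _ => if b then (1:ℝ) else 0 := rfl
      rw [this, coeff_const _ hSne, abs_zero]
    rw [hz]
    positivity

/-- Reindexing `S ↦ S.erase j`. -/
lemma sum_erase_reindex (c : Finset α → ℝ) (j : α) (ℓ : ℕ) :
    ∑ S ∈ Finset.univ.filter (fun S : Finset α => S.card = ℓ + 1 ∧ j ∈ S), |c (S.erase j)|
      = ∑ U ∈ Finset.univ.filter (fun U : Finset α => U.card = ℓ ∧ j ∉ U), |c U| := by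
  apply Finset.sum_nbij' (i := fun S => S.erase j) (j := fun U => insert j U)
  · intro S hS
    simp only [Finset.mem_filter, Finset.mem_univ, true_and] at hS ⊢
    refine ⟨?_, Finset.notMem_erase j S⟩
    rw [Finset.card_erase_of_mem hS.2, hS.1]
    omega
  · intro U hU
    simp only [Finset.mem_filter, Finset.mem_univ, true_and] at hU ⊢
    refine ⟨?_, Finset.mem_insert_self j U⟩
    rw [Finset.card_insert_of_notMem hU.2, hU.1]
  · intro S hS
    simp only [Finset.mem_filter, Finset.mem_univ, true_and] at hS
    exact Finset.insert_erase hS.2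
  · intro U hU
    simp only [Finset.mem_filter, Finset.mem_univ, true_and] at hU
    exact Finset.erase_insert hU.2
  · intro S _
    rfl

lemma levelSum_nonneg_terms (f : (α → Bool) → ℝ) (ℓ : ℕ)
    (s : Finset (Finset α))
    (hs : s ⊆ Finset.univ.filter (fun S : Finset α => S.card = ℓ)) :
    ∑ S ∈ s, |booleanFourierCoeff f S| ≤ levelSum f ℓ :=
  Finset.sum_le_sum_of_subset_of_nonneg hs (fun _ _ _ => abs_nonneg _)

/-- Main inductive bound. -/
lemma main_bound : ∀ (d : ℕ) (T : DTree α) (ℓ : ℕ), T.depth ≤ d →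
    levelSum T.eval ℓ ≤ (d.choose ℓ : ℝ) := by
  intro d
  induction d with
  | zero =>
    intro T ℓ hT
    cases T with
    | leaf b => exact levelSum_leaf_le b 0 ℓ
    | node i t0 t1 => simp [DTree.depth] at hT
  | succ d ih =>
    intro T ℓ hT
    cases T with
    | leaf b => exact levelSum_leaf_le b (d+1) ℓ
    | node j t0 t1 =>
      have hd0 : t0.depth ≤ d := by
        rw [DTree.depth] at hT; omega
      have hd1 : t1.depth ≤ d := by
        rw [DTree.depth] at hT; omega
      set g0 : (α → Bool) → ℝ := (DTree.restrict j false t0).eval with hg0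
      set g1 : (α → Bool) → ℝ := (DTree.restrict j true t1).eval with hg1
      have hindep0 : ∀ (x : α → Bool) (c : Bool), g0 (Function.update x j c) = g0 x :=
        fun x c => DTree.eval_restrict_indep j false t0 x c
      have hindep1 : ∀ (x : α → Bool) (c : Bool), g1 (Function.update x j c) = g1 x :=
        fun x c => DTree.eval_restrict_indep j true t1 x c
      have hfg : (DTree.node j t0 t1).eval = fun x => if x j then g1 x else g0 x := by
        funext x
        show (if x j then t1.eval x else t0.eval x) = if x j then g1 x else g0 x
        by_cases hx : x j = true
        · rw [if_pos hx, if_pos hx, hg1, DTree.eval_restrict]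
          congr 1
          funext i
          by_cases h : i = j
          · subst h; rw [Function.update_self, hx]
          · rw [Function.update_of_ne h]
        · rw [if_neg hx, if_neg hx, hg0, DTree.eval_restrict]
          congr 1
          funext i
          by_cases h : i = j
          · subst h
            rw [Function.update_self]
            exact (Bool.not_eq_true _).mp hx
          · rw [Function.update_of_ne h]
      cases ℓ with
      | zero =>
        have h := levelSum_zero_le (DTree.node j t0 t1).eval
          (fun x => DTree.eval_nonneg _ x) (fun x => DTree.eval_le_one _ x)
        simpa using h
      | succ m =>
        -- split the level-(m+1) sum according to j ∈ S
        have hb0 : levelSum g0 (m+1) ≤ (d.choose (m+1) : ℝ) :=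
          ih _ _ (le_trans (DTree.depth_restrict j false t0) hd0)
        have hb1 : levelSum g1 (m+1) ≤ (d.choose (m+1) : ℝ) :=
          ih _ _ (le_trans (DTree.depth_restrict j true t1) hd1)
        have hb0' : levelSum g0 m ≤ (d.choose m : ℝ) :=
          ih _ _ (le_trans (DTree.depth_restrict j false t0) hd0)
        have hb1' : levelSum g1 m ≤ (d.choose m : ℝ) :=
          ih _ _ (le_trans (DTree.depth_restrict j true t1) hd1)
        rw [hfg, levelSum]
        rw [← Finset.sum_filter_add_sum_filter_not
          (Finset.univ.filter (fun S : Finset α => S.card = m + 1)) (fun S => j ∈ S)]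
        have hsplit1 :
            ∑ S ∈ (Finset.univ.filter (fun S : Finset α => S.card = m + 1)).filter
                (fun S => j ∈ S),
              |booleanFourierCoeff (fun x => if x j then g1 x else g0 x) S|
            ≤ (levelSum g0 m + levelSum g1 m) / 2 := by
          rw [Finset.filter_filter]
          have hterm : ∀ S ∈ Finset.univ.filter
              (fun S : Finset α => S.card = m + 1 ∧ j ∈ S),
              |booleanFourierCoeff (fun x => if x j then g1 x else g0 x) S|
                ≤ (|booleanFourierCoeff g0 (S.erase j)|
                    + |booleanFourierCoeff g1 (S.erase j)|) / 2 := by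
            intro S hS
            simp only [Finset.mem_filter, Finset.mem_univ, true_and] at hS
            rw [coeff_node g0 g1 j S]
            rw [coeff_eq_zero_of_indep g0 j hindep0 hS.2,
              coeff_eq_zero_of_indep g1 j hindep1 hS.2]
            simp only [hS.2, if_true]
            rw [show ((0:ℝ) + 0)/2 = 0 by norm_num, zero_add]
            calc |(booleanFourierCoeff g1 (S.erase j)
                    - booleanFourierCoeff g0 (S.erase j)) / 2|
                = |booleanFourierCoeff g1 (S.erase j)
                    - booleanFourierCoeff g0 (S.erase j)| / 2 := by
                  rw [abs_div]; norm_num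
              _ ≤ (|booleanFourierCoeff g1 (S.erase j)|
                    + |booleanFourierCoeff g0 (S.erase j)|) / 2 := by
                  have := abs_sub (booleanFourierCoeff g1 (S.erase j))
                    (booleanFourierCoeff g0 (S.erase j))
                  linarith [abs_sub_abs_le_abs_sub (booleanFourierCoeff g1 (S.erase j))
                    (booleanFourierCoeff g0 (S.erase j)),
                    abs_sub_le_iff.mp (le_refl |booleanFourierCoeff g1 (S.erase j)
                      - booleanFourierCoeff g0 (S.erase j)|)]
              _ = (|booleanFourierCoeff g0 (S.erase j)|
                    + |booleanFourierCoeff g1 (S.erase j)|) / 2 := by ring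
          calc ∑ S ∈ Finset.univ.filter (fun S : Finset α => S.card = m + 1 ∧ j ∈ S),
                |booleanFourierCoeff (fun x => if x j then g1 x else g0 x) S|
              ≤ ∑ S ∈ Finset.univ.filter (fun S : Finset α => S.card = m + 1 ∧ j ∈ S),
                (|booleanFourierCoeff g0 (S.erase j)|
                  + |booleanFourierCoeff g1 (S.erase j)|) / 2 :=
                Finset.sum_le_sum hterm
            _ = ((∑ S ∈ Finset.univ.filter (fun S : Finset α => S.card = m + 1 ∧ j ∈ S),
                    |booleanFourierCoeff g0 (S.erase j)|)
                  + ∑ S ∈ Finset.univ.filter (fun S : Finset α => S.card = m + 1 ∧ j ∈ S),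
                    |booleanFourierCoeff g1 (S.erase j)|) / 2 := by
                rw [← Finset.sum_add_distrib, Finset.sum_div]
            _ ≤ (levelSum g0 m + levelSum g1 m) / 2 := by
                rw [sum_erase_reindex (booleanFourierCoeff g0) j m,
                  sum_erase_reindex (booleanFourierCoeff g1) j m]
                have h0 : ∑ U ∈ Finset.univ.filter
                      (fun U : Finset α => U.card = m ∧ j ∉ U),
                    |booleanFourierCoeff g0 U| ≤ levelSum g0 m := by
                  apply levelSum_nonneg_terms
                  intro U hU
                  simp only [Finset.mem_filter, Finset.mem_univ, true_and] at hU ⊢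
                  exact hU.1
                have h1 : ∑ U ∈ Finset.univ.filter
                      (fun U : Finset α => U.card = m ∧ j ∉ U),
                    |booleanFourierCoeff g1 U| ≤ levelSum g1 m := by
                  apply levelSum_nonneg_terms
                  intro U hU
                  simp only [Finset.mem_filter, Finset.mem_univ, true_and] at hU ⊢
                  exact hU.1
                linarith
        have hsplit2 :
            ∑ S ∈ (Finset.univ.filter (fun S : Finset α => S.card = m + 1)).filter
                (fun S => ¬ j ∈ S),
              |booleanFourierCoeff (fun x => if x j then g1 x else g0 x) S|
            ≤ (levelSum g0 (m+1) + levelSum g1 (m+1)) / 2 := by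
          rw [Finset.filter_filter]
          have hterm : ∀ S ∈ Finset.univ.filter
              (fun S : Finset α => S.card = m + 1 ∧ ¬ j ∈ S),
              |booleanFourierCoeff (fun x => if x j then g1 x else g0 x) S|
                ≤ (|booleanFourierCoeff g0 S| + |booleanFourierCoeff g1 S|) / 2 := by
            intro S hS
            simp only [Finset.mem_filter, Finset.mem_univ, true_and] at hS
            rw [coeff_node g0 g1 j S]
            simp only [hS.2, if_false]
            rw [coeff_eq_zero_of_indep g0 j hindep0 (Finset.mem_insert_self j S),
              coeff_eq_zero_of_indep g1 j hindep1 (Finset.mem_insert_self j S)]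
            rw [show ((0:ℝ) - 0)/2 = 0 by norm_num, add_zero]
            calc |(booleanFourierCoeff g0 S + booleanFourierCoeff g1 S) / 2|
                = |booleanFourierCoeff g0 S + booleanFourierCoeff g1 S| / 2 := by
                  rw [abs_div]; norm_num
              _ ≤ (|booleanFourierCoeff g0 S| + |booleanFourierCoeff g1 S|) / 2 := by
                  have := abs_add_le (booleanFourierCoeff g0 S) (booleanFourierCoeff g1 S)
                  linarith
          calc ∑ S ∈ Finset.univ.filter (fun S : Finset α => S.card = m + 1 ∧ ¬ j ∈ S),
                |booleanFourierCoeff (fun x => if x j then g1 x else g0 x) S|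
              ≤ ∑ S ∈ Finset.univ.filter (fun S : Finset α => S.card = m + 1 ∧ ¬ j ∈ S),
                (|booleanFourierCoeff g0 S| + |booleanFourierCoeff g1 S|) / 2 :=
                Finset.sum_le_sum hterm
            _ = ((∑ S ∈ Finset.univ.filter (fun S : Finset α => S.card = m + 1 ∧ ¬ j ∈ S),
                    |booleanFourierCoeff g0 S|)
                  + ∑ S ∈ Finset.univ.filter (fun S : Finset α => S.card = m + 1 ∧ ¬ j ∈ S),
                    |booleanFourierCoeff g1 S|) / 2 := by
                rw [← Finset.sum_add_distrib, Finset.sum_div]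
            _ ≤ (levelSum g0 (m+1) + levelSum g1 (m+1)) / 2 := by
                have h0 : ∑ S ∈ Finset.univ.filter
                      (fun S : Finset α => S.card = m + 1 ∧ ¬ j ∈ S),
                    |booleanFourierCoeff g0 S| ≤ levelSum g0 (m+1) := by
                  apply levelSum_nonneg_terms
                  intro U hU
                  simp only [Finset.mem_filter, Finset.mem_univ, true_and] at hU ⊢
                  exact hU.1
                have h1 : ∑ S ∈ Finset.univ.filter
                      (fun S : Finset α => S.card = m + 1 ∧ ¬ j ∈ S),
                    |booleanFourierCoeff g1 S| ≤ levelSum g1 (m+1) := by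
                  apply levelSum_nonneg_terms
                  intro U hU
                  simp only [Finset.mem_filter, Finset.mem_univ, true_and] at hU ⊢
                  exact hU.1
                linarith
        have hpascal : ((d+1).choose (m+1) : ℝ) = (d.choose m : ℝ) + (d.choose (m+1) : ℝ) := by
          rw [Nat.choose_succ_succ]
          push_cast
          ring
        rw [hpascal]
        linarith
  
end Level

/-- for every Boolean function `f : {-1,1}^n → {0,1}` computed
by a decision tree of depth at most `d` and every `0 ≤ ℓ ≤ d`,
`∑_{|S|=ℓ} |f̂(S)| ≤ C(d,ℓ)` (the binomial coefficient). -/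
theorem level_l_binomial_bound_decision_trees
    (n d ℓ : ℕ) (f : (Fin n → Bool) → ℝ) (T : DTree (Fin n))
    (hdepth : T.depth ≤ d) (hcomp : ∀ x, f x = T.eval x) (hℓ : ℓ ≤ d) :
    ∑ S ∈ Finset.univ.filter (fun S : Finset (Fin n) => S.card = ℓ),
        |booleanFourierCoeff f S| ≤ (d.choose ℓ : ℝ) := by
  have hf : f = T.eval := funext hcomp
  have := main_bound d T ℓ hdepth
  rw [levelSum] at this
  rw [hf]
  exact this
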